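/- arXiv:2404.08473 — 7 statements merged into one kernel-verified Lean document; each statement's English description precedes it below -/
import Mathlib

section
/- Let H be a complex Hilbert space and let T, P ∈ B(H). If the power sequence {T^n} converges weakly to P, then P is a projection (P² = P) which commutes with T (TP = PT), the range of P equals ker(I − T), and the restriction of T to the closed subspace ran(I − P) is weakly stable, i.e., for every x ∈ ran(I − P) and every y ∈ H one has ⟨T^n x, y⟩ → 0 as n → ∞. -/
/-!
Testing the weak convergence against `T x` and against `T* y` gives `P T = P` and `T P = P`.
A fixed vector of `T` has constant powers, hence is fixed by `P`; with `T P = P` this gives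
`P² = P` and `ran P = ker (I - T)`. Finally `P` kills `ran (I - P)`, so the weak
limit of the powers is `0` there.
-/

open Filter Topology

section WeakLimitOfPowers

variable {𝕜 E : Type*} [RCLike 𝕜] [NormedAddCommGroup E] [InnerProductSpace 𝕜 E]

theorem eq_of_tendsto_inner_right {ι : Type*} {l : Filter ι} [l.NeBot] {u : ι → E} {a b : E}
    (ha : ∀ y, Tendsto (fun i => inner 𝕜 (u i) y) l (𝓝 (inner 𝕜 a y)))
    (hb : ∀ y, Tendsto (fun i => inner 𝕜 (u i) y) l (𝓝 (inner 𝕜 b y))) : a = b :=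
  ext_inner_right 𝕜 fun y => tendsto_nhds_unique (ha y) (hb y)

variable {T P : E →L[𝕜] E}
  (hconv : ∀ x y, Tendsto (fun n : ℕ => inner 𝕜 ((T ^ n) x) y) atTop (𝓝 (inner 𝕜 (P x) y)))
include hconv

theorem apply_eq_self_of_tendsto_pow {x : E} (hx : T x = x) : P x = x := by
  have hpow (n : ℕ) : (T ^ n) x = x := by
    rw [pow_apply_eq_iterate]
    exact Function.iterate_fixed hx n
  refine eq_of_tendsto_inner_right (hconv x) fun y => ?_
  simpa only [hpow] using tendsto_const_nhds

theorem comp_self_of_tendsto_pow : P ∘L T = P := by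
  ext x
  refine eq_of_tendsto_inner_right (hconv (T x)) fun y => ?_
  simpa only [pow_succ, mul_apply_eq_comp] using (tendsto_add_atTop_iff_nat 1).mpr (hconv x y)

theorem self_comp_of_tendsto_pow [CompleteSpace E] : T ∘L P = P := by
  ext x
  refine eq_of_tendsto_inner_right (u := fun n => (T ^ (n + 1)) x) (fun y => ?_)
    fun y => (tendsto_add_atTop_iff_nat 1).mpr (hconv x y)
  simpa only [ContinuousLinearMap.adjoint_inner_right, pow_succ', mul_apply_eq_comp,
    ContinuousLinearMap.comp_apply] using hconv x (ContinuousLinearMap.adjoint T y)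

end WeakLimitOfPowers

/-- If the power sequence `{T^n}` converges weakly to `P`, then `P` is a projection
commuting with `T`, `ran P = ker (I - T)`, and the restriction of `T` to `ran (I - P)`
is weakly stable. -/
theorem stmt0 {H : Type*} [NormedAddCommGroup H] [InnerProductSpace ℂ H] [CompleteSpace H]
    (T P : H →L[ℂ] H)
    (hconv : ∀ x y : H,
      Tendsto (fun n : ℕ => (inner ℂ ((T ^ n) x) y : ℂ)) atTop (𝓝 (inner ℂ (P x) y))) :
    P ∘L P = P ∧ T ∘L P = P ∘L T ∧ LinearMap.range (P : H →ₗ[ℂ] H) = LinearMap.ker ((1 - T : H →L[ℂ] H) : H →ₗ[ℂ] H) ∧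
      ∀ x ∈ LinearMap.range ((1 - P : H →L[ℂ] H) : H →ₗ[ℂ] H), ∀ y : H,
        Tendsto (fun n : ℕ => (inner ℂ ((T ^ n) x) y : ℂ)) atTop (𝓝 (0 : ℂ)) := by
  have hTP (x : H) : T (P x) = P x := congr($(self_comp_of_tendsto_pow hconv) x)
  have hPT (x : H) : P (T x) = P x := congr($(comp_self_of_tendsto_pow hconv) x)
  have hPP (x : H) : P (P x) = P x := apply_eq_self_of_tendsto_pow hconv (hTP x)
  refine ⟨?_, ?_, ?_, ?_⟩
  · ext x; exact hPP x
  · ext x; simp only [ContinuousLinearMap.comp_apply, hTP, hPT]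
  · ext x
    simp only [LinearMap.mem_range, LinearMap.mem_ker, ContinuousLinearMap.coe_coe,
      sub_apply, one_apply_eq_self, sub_eq_zero]
    constructor
    · rintro ⟨z, rfl⟩; exact (hTP z).symm
    · intro hx; exact ⟨x, apply_eq_self_of_tendsto_pow hconv hx.symm⟩
  · rintro _ ⟨z, rfl⟩ y
    have hker : P ((1 - P) z) = 0 := by
      simp only [sub_apply, one_apply_eq_self, map_sub, hPP, sub_self]
    simpa only [ContinuousLinearMap.coe_coe, hker, inner_zero_left] using hconv ((1 - P) z) y
end

section
/- Let H be a complex Hilbert space and let T ∈ B(H). Then T is weakly stable if and only if ker(I − T) = {0} and the power sequence {T^n} is weakly convergent (i.e., there exists A ∈ B(H) such that {T^n} converges weakly to A). -/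
open Filter Topology
open scoped InnerProductSpace

/-!
A weak limit `A` of the powers `T ^ n` satisfies `T ∘ A = A`, because moving one factor `T`
across the inner product as `T†` shows that `T ^ (n + 1) x` converges weakly to both `A x` and
`T (A x)`. So if `T` has no nonzero fixed vector, the weak limit is `0`. Conversely, a fixed
vector `x` of a weakly stable `T` satisfies `⟪x, x⟫ = ⟪T ^ n x, x⟫ → 0`.
-/

namespace ContinuousLinearMap

variable {𝕜 H : Type*} [RCLike 𝕜] [NormedAddCommGroup H] [InnerProductSpace 𝕜 H]

lemma mem_ker_one_sub_iff {T : H →L[𝕜] H} {x : H} :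
    x ∈ LinearMap.ker ((1 - T : H →L[𝕜] H) : H →ₗ[𝕜] H) ↔ T x = x := by
  rw [LinearMap.mem_ker, coe_coe, sub_apply, one_apply_eq_self, sub_eq_zero, eq_comm]

lemma pow_apply_eq_self_of_apply_eq_self {T : H →L[𝕜] H} {x : H} (hx : T x = x) (n : ℕ) :
    (T ^ n) x = x := by
  rw [pow_apply_eq_iterate]
  exact Function.iterate_fixed hx n

lemma eq_zero_of_apply_eq_self_of_tendsto_inner_pow {T : H →L[𝕜] H} {x : H} (hx : T x = x)
    (hT : Tendsto (fun n : ℕ => ⟪(T ^ n) x, x⟫_𝕜) atTop (𝓝 0)) : x = 0 := by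
  simp only [pow_apply_eq_self_of_apply_eq_self hx] at hT
  exact inner_self_eq_zero.mp (tendsto_nhds_unique tendsto_const_nhds hT)

lemma apply_eq_self_of_tendsto_inner_pow [CompleteSpace H] {T : H →L[𝕜] H} {x a : H}
    (hT : ∀ y, Tendsto (fun n : ℕ => ⟪(T ^ n) x, y⟫_𝕜) atTop (𝓝 ⟪a, y⟫_𝕜)) : T a = a := by
  refine ext_inner_right 𝕜 fun y =>
    tendsto_nhds_unique ?_ ((tendsto_add_atTop_iff_nat 1).mpr (hT y))
  have hshift : ∀ n : ℕ, ⟪(T ^ n) x, adjoint T y⟫_𝕜 = ⟪(T ^ (n + 1)) x, y⟫_𝕜 := fun n => by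
    rw [adjoint_inner_right, pow_succ', mul_apply_eq_comp]
  simpa only [hshift, adjoint_inner_right] using hT (adjoint T y)

lemma eq_zero_of_tendsto_inner_pow [CompleteSpace H] {T : H →L[𝕜] H} {A : H →L[𝕜] H}
    (hker : LinearMap.ker ((1 - T : H →L[𝕜] H) : H →ₗ[𝕜] H) = ⊥)
    (hA : ∀ x y : H, Tendsto (fun n : ℕ => ⟪(T ^ n) x, y⟫_𝕜) atTop (𝓝 ⟪A x, y⟫_𝕜)) :
    A = 0 := by
  ext x
  have hfix : A x ∈ LinearMap.ker ((1 - T : H →L[𝕜] H) : H →ₗ[𝕜] H) :=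
    mem_ker_one_sub_iff.mpr (apply_eq_self_of_tendsto_inner_pow (hA x))
  rwa [hker, Submodule.mem_bot] at hfix

end ContinuousLinearMap

/-- `T` is weakly stable if and only if `ker (I - T) = {0}` and the power sequence
`{T^n}` is weakly convergent. -/
theorem stmt2 {H : Type*} [NormedAddCommGroup H] [InnerProductSpace ℂ H] [CompleteSpace H]
    (T : H →L[ℂ] H) :
    (∀ x y : H, Tendsto (fun n : ℕ => (inner ℂ ((T ^ n) x) y : ℂ)) atTop (𝓝 (0 : ℂ)))
      ↔ LinearMap.ker ((1 - T : H →L[ℂ] H) : H →ₗ[ℂ] H) = ⊥ ∧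
        ∃ A : H →L[ℂ] H, ∀ x y : H,
          Tendsto (fun n : ℕ => (inner ℂ ((T ^ n) x) y : ℂ)) atTop (𝓝 (inner ℂ (A x) y)) := by
  constructor
  · intro hT
    refine ⟨(Submodule.eq_bot_iff _).mpr fun x hx => ?_, 0, ?_⟩
    · exact ContinuousLinearMap.eq_zero_of_apply_eq_self_of_tendsto_inner_pow
        (ContinuousLinearMap.mem_ker_one_sub_iff.mp hx) (hT x x)
    · simpa only [zero_apply, inner_zero_left] using hT
  · rintro ⟨hker, A, hA⟩
    obtain rfl := ContinuousLinearMap.eq_zero_of_tendsto_inner_pow hker hA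
    simpa only [zero_apply, inner_zero_left] using hA
end

section
/- Let H be a complex Hilbert space and let T, P ∈ B(H). Then ‖T^n − P‖ → 0 as n → ∞ if and only if P is a projection (P² = P) satisfying TP = PT and ran(P) = ker(I − T), and the restriction of T to ran(I − P) is uniformly stable, i.e., sup{‖T^n x‖ : x ∈ ran(I − P), ‖x‖ ≤ 1} → 0 as n → ∞. -/
/-! If `T^n → P` in norm, passing to the limit in `T^(n+1) = T T^n = T^n T` gives
`TP = PT = P`, hence `T^n P = P` and `P² = P`; a fixed point `x` of `T` satisfies
`x = T^n x → P x`; and `T^n` agrees with `T^n - P` on `ran (I - P)`, where `P` vanishes.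
Conversely `ran P ⊆ ker (I - T)` gives `T^n P = P`, so `T^n - P = T^n (I - P)` factors
through `ran (I - P)` and has norm at most `‖T^n|ran (I - P)‖ ‖I - P‖`. -/

open Filter Topology

theorem ContinuousLinearMap.sSup_submodule_unitClosedBall_eq_norm_comp_subtypeL {𝕜 E F : Type*}
    [DenselyNormedField 𝕜] [NormedAddCommGroup E] [NormedSpace 𝕜 E]
    [SeminormedAddCommGroup F] [NormedSpace 𝕜 F]
    (A : E →L[𝕜] F) (V : Submodule 𝕜 E) :
    sSup {r : ℝ | ∃ x ∈ V, ‖x‖ ≤ 1 ∧ r = ‖A x‖} = ‖A ∘L V.subtypeL‖ := by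
  rw [← sSup_unitClosedBall_eq_norm]
  congr 1
  ext r
  simp [eq_comm, and_left_comm]

theorem pow_mul_eq_of_mul_eq {M : Type*} [Monoid M] {a p : M} (h : a * p = p) (n : ℕ) :
    a ^ n * p = p := by
  induction n with
  | zero => rw [pow_zero, one_mul]
  | succ n ih => rw [pow_succ', mul_assoc, ih, h]

section Monoid
variable {M : Type*} [Monoid M] [TopologicalSpace M] [ContinuousMul M] [T2Space M] {a p : M}

theorem mul_eq_right_of_tendsto_pow (h : Tendsto (a ^ ·) atTop (𝓝 p)) : a * p = p :=
  tendsto_nhds_unique (h.const_mul a) <| by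
    simpa only [pow_succ'] using (tendsto_add_atTop_iff_nat 1).mpr h

theorem mul_eq_left_of_tendsto_pow (h : Tendsto (a ^ ·) atTop (𝓝 p)) : p * a = p :=
  tendsto_nhds_unique (h.mul_const a) <| by
    simpa only [pow_succ] using (tendsto_add_atTop_iff_nat 1).mpr h

theorem isIdempotentElem_of_tendsto_pow (h : Tendsto (a ^ ·) atTop (𝓝 p)) : IsIdempotentElem p :=
  tendsto_nhds_unique (h.mul_const p) <| by
    simp only [pow_mul_eq_of_mul_eq (mul_eq_right_of_tendsto_pow h), tendsto_const_nhds]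

end Monoid

namespace ContinuousLinearMap

variable {𝕜 E F G : Type*} [NontriviallyNormedField 𝕜]
  [NormedAddCommGroup E] [NormedSpace 𝕜 E] [NormedAddCommGroup F] [NormedSpace 𝕜 F]
  [NormedAddCommGroup G] [NormedSpace 𝕜 G]

theorem opNorm_comp_le_opNorm_comp_subtypeL_range_mul (A : F →L[𝕜] G) (B : E →L[𝕜] F) :
    ‖A ∘L B‖ ≤ ‖A ∘L (LinearMap.range (B : E →ₗ[𝕜] F)).subtypeL‖ * ‖B‖ := by
  refine opNorm_le_bound _ (by positivity) fun x => ?_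
  calc ‖A (B x)‖ ≤ ‖A ∘L (LinearMap.range (B : E →ₗ[𝕜] F)).subtypeL‖ * ‖B x‖ :=
        (A ∘L (LinearMap.range (B : E →ₗ[𝕜] F)).subtypeL).le_opNorm
          ⟨B x, LinearMap.mem_range_self _ x⟩
    _ ≤ _ := by rw [mul_assoc]; gcongr; exact le_opNorm B x

theorem opNorm_comp_subtypeL_range_one_sub_le_norm_sub {P : E →L[𝕜] E} (hP : IsIdempotentElem P)
    (A : E →L[𝕜] E) :
    ‖A ∘L (LinearMap.range ((1 - P : E →L[𝕜] E) : E →ₗ[𝕜] E)).subtypeL‖ ≤ ‖A - P‖ := by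
  have hA : A ∘L (LinearMap.range ((1 - P : E →L[𝕜] E) : E →ₗ[𝕜] E)).subtypeL =
      (A - P) ∘L (LinearMap.range ((1 - P : E →L[𝕜] E) : E →ₗ[𝕜] E)).subtypeL := by
    ext ⟨-, y, rfl⟩
    have hPy : P ((1 - P) y) = 0 := congr($(hP.mul_one_sub_self) y)
    change A ((1 - P) y) = A ((1 - P) y) - P ((1 - P) y)
    rw [hPy, sub_zero]
  rw [hA]
  exact (opNorm_comp_le _ _).trans
    (mul_le_of_le_one_right (norm_nonneg _) (Submodule.norm_subtypeL_le _))

theorem mul_eq_of_range_le_ker_one_sub {T P : E →L[𝕜] E}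
    (h : LinearMap.range (P : E →ₗ[𝕜] E) ≤ LinearMap.ker ((1 - T : E →L[𝕜] E) : E →ₗ[𝕜] E)) :
    T * P = P := by
  ext x
  have hx : (1 - T) (P x) = 0 := h (LinearMap.mem_range_self _ x)
  rw [sub_apply, one_apply_eq_self, sub_eq_zero] at hx
  exact hx.symm

theorem range_eq_ker_one_sub_of_tendsto_pow {T P : E →L[𝕜] E}
    (h : Tendsto (T ^ ·) atTop (𝓝 P)) :
    LinearMap.range (P : E →ₗ[𝕜] E) = LinearMap.ker ((1 - T : E →L[𝕜] E) : E →ₗ[𝕜] E) := by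
  ext x
  simp only [LinearMap.mem_range, LinearMap.mem_ker, coe_coe, sub_apply, one_apply_eq_self,
    sub_eq_zero]
  constructor
  · rintro ⟨y, rfl⟩
    exact (congr($(mul_eq_right_of_tendsto_pow h) y)).symm
  · intro hx
    have hfix : ∀ n : ℕ, (T ^ n) x = x := fun n => by
      rw [FunLike.coe_pow_eq_iterate]; exact Function.iterate_fixed hx.symm n
    refine ⟨x, tendsto_nhds_unique ((continuous_eval_const x).tendsto P |>.comp h) ?_⟩
    simp only [Function.comp_def, hfix, tendsto_const_nhds]

end ContinuousLinearMap

theorem stmt5_general {H : Type*} [NormedAddCommGroup H] [InnerProductSpace ℂ H]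
    (T P : H →L[ℂ] H) :
    Tendsto (fun n : ℕ => ‖T ^ n - P‖) atTop (𝓝 (0 : ℝ))
      ↔ P ∘L P = P ∧ T ∘L P = P ∘L T ∧ LinearMap.range (P : H →ₗ[ℂ] H) = LinearMap.ker ((1 - T : H →L[ℂ] H) : H →ₗ[ℂ] H) ∧
        Tendsto
          (fun n : ℕ =>
            sSup {r : ℝ | ∃ x ∈ LinearMap.range ((1 - P : H →L[ℂ] H) : H →ₗ[ℂ] H), ‖x‖ ≤ 1 ∧ r = ‖(T ^ n) x‖})
          atTop (𝓝 (0 : ℝ)) := by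
  simp only [ContinuousLinearMap.sSup_submodule_unitClosedBall_eq_norm_comp_subtypeL,
    ← tendsto_iff_norm_sub_tendsto_zero]
  constructor
  · intro h
    have hP := isIdempotentElem_of_tendsto_pow h
    refine ⟨hP, (mul_eq_right_of_tendsto_pow h).trans (mul_eq_left_of_tendsto_pow h).symm,
      ContinuousLinearMap.range_eq_ker_one_sub_of_tendsto_pow h, ?_⟩
    exact squeeze_zero (fun n => ContinuousLinearMap.opNorm_nonneg _)
      (fun n => ContinuousLinearMap.opNorm_comp_subtypeL_range_one_sub_le_norm_sub hP (T ^ n))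
      (tendsto_iff_norm_sub_tendsto_zero.mp h)
  · rintro ⟨-, -, hrange, hstable⟩
    have hTP := ContinuousLinearMap.mul_eq_of_range_le_ker_one_sub hrange.le
    have hsub : ∀ n : ℕ, T ^ n - P = T ^ n * (1 - P) := fun n => by
      rw [mul_sub, mul_one, pow_mul_eq_of_mul_eq hTP]
    rw [tendsto_iff_norm_sub_tendsto_zero]
    refine squeeze_zero (fun n => norm_nonneg (T ^ n - P)) (fun n => ?_)
      (by simpa only [zero_mul] using hstable.mul_const ‖1 - P‖)
    rw [hsub]
    exact ContinuousLinearMap.opNorm_comp_le_opNorm_comp_subtypeL_range_mul _ _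

/-- `‖T^n - P‖ → 0` if and only if `P` is a projection commuting with `T` with
`ran P = ker (I - T)` and the restriction of `T` to `ran (I - P)` is uniformly stable,
i.e. `sup {‖T^n x‖ : x ∈ ran (I - P), ‖x‖ ≤ 1} → 0`. -/
theorem stmt5 {H : Type*} [NormedAddCommGroup H] [InnerProductSpace ℂ H] [CompleteSpace H]
    (T P : H →L[ℂ] H) :
    Tendsto (fun n : ℕ => ‖T ^ n - P‖) atTop (𝓝 (0 : ℝ))
      ↔ P ∘L P = P ∧ T ∘L P = P ∘L T ∧ LinearMap.range (P : H →ₗ[ℂ] H) = LinearMap.ker ((1 - T : H →L[ℂ] H) : H →ₗ[ℂ] H) ∧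
        Tendsto
          (fun n : ℕ =>
            sSup {r : ℝ | ∃ x ∈ LinearMap.range ((1 - P : H →L[ℂ] H) : H →ₗ[ℂ] H), ‖x‖ ≤ 1 ∧ r = ‖(T ^ n) x‖})
          atTop (𝓝 (0 : ℝ)) :=
  stmt5_general T P
end

section
/- Let H be a complex Hilbert space and let T, P ∈ B(H). Then the power sequence {T^n} converges weakly to P if and only if there exist a complex Hilbert space K, a bounded linear bijection S : K → H with bounded inverse, and R ∈ B(K) such that T = S R S⁻¹ and the power sequence {R^n} converges weakly to an orthogonal projection Q ∈ B(K). Moreover, in that case P = S Q S⁻¹. -/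
/-!
A weak limit `P` of the powers of `T` satisfies `T P = P`, hence `T ^ n P = P` for all `n` and so
`P² = P`. An idempotent `P` is similar to the orthogonal projection `E` onto its closed range:
from `P E = E` and `E P = P` one checks that `1 + E - P` is invertible, with inverse `1 - E + P`,
and conjugates `E` to `P`. Weak convergence of powers is transported along similarities, which
gives both directions.
-/

open Filter Topology ContinuousLinearMap

universe u

theorem exists_units_conj_eq_of_mul_eq {A : Type*} [Ring A] {p e : A}
    (hpe : p * e = e) (hep : e * p = p) : ∃ u : Aˣ, p = u * e * ↑u⁻¹ := by
  have he : e * e = e :=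
    calc e * e = e * (p * e) := by rw [hpe]
      _ = p * e := by rw [← mul_assoc, hep]
      _ = e := hpe
  have hp : p * p = p :=
    calc p * p = p * (e * p) := by rw [hep]
      _ = e * p := by rw [← mul_assoc, hpe]
      _ = p := hep
  have h₁ : (1 - e + p) * (1 + e - p) = 1 := by noncomm_ring; simp only [he, hp, hpe, hep]; abel
  have h₂ : (1 + e - p) * (1 - e + p) = 1 := by noncomm_ring; simp only [he, hp, hpe, hep]; abel
  refine ⟨⟨1 + e - p, 1 - e + p, h₂, h₁⟩, ?_⟩
  show p = (1 + e - p) * e * (1 - e + p)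
  noncomm_ring; simp only [he, hp, hpe, hep]; abel

section

variable {𝕜 H K : Type*} [RCLike 𝕜] [NormedAddCommGroup H] [InnerProductSpace 𝕜 H]
  [NormedAddCommGroup K] [InnerProductSpace 𝕜 K]

theorem IsIdempotentElem.exists_conj_isStarProjection [CompleteSpace H] {P : H →L[𝕜] H}
    (hP : IsIdempotentElem P) :
    ∃ (S : H ≃L[𝕜] H) (E : H →L[𝕜] H), IsStarProjection E ∧ P = S ∘L E ∘L S.symm := by
  have : CompleteSpace P.range := hP.isClosed_range.completeSpace_coe
  set E := P.range.starProjection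
  have hPE : P * E = E := by
    ext x
    exact (LinearMap.IsIdempotentElem.mem_range_iff (isIdempotentElem_toLinearMap_iff.2 hP)).1
      (P.range.starProjection_apply_mem x)
  have hEP : E * P = P := by
    ext x
    exact Submodule.starProjection_eq_self_iff.2 ⟨x, rfl⟩
  obtain ⟨u, hu⟩ := exists_units_conj_eq_of_mul_eq hPE hEP
  exact ⟨ContinuousLinearEquiv.unitsEquiv 𝕜 H u, E, isStarProjection_starProjection, hu⟩

def HasWeakPowerLimit (T P : H →L[𝕜] H) : Prop :=
  ∀ x y : H, Tendsto (fun n : ℕ => inner 𝕜 ((T ^ n) x) y) atTop (𝓝 (inner 𝕜 (P x) y))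

namespace HasWeakPowerLimit

variable {T P : H →L[𝕜] H}

theorem conj [CompleteSpace H] [CompleteSpace K] {R Q : K →L[𝕜] K} (h : HasWeakPowerLimit R Q)
    (S : K ≃L[𝕜] H) :
    HasWeakPowerLimit ((S : K →L[𝕜] H) ∘L R ∘L (S.symm : H →L[𝕜] K))
      ((S : K →L[𝕜] H) ∘L Q ∘L (S.symm : H →L[𝕜] K)) := by
  intro x y
  have hpow (n : ℕ) : ((S : K →L[𝕜] H) ∘L R ∘L (S.symm : H →L[𝕜] K)) ^ n
      = (S : K →L[𝕜] H) ∘L (R ^ n) ∘L (S.symm : H →L[𝕜] K) :=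
    (map_pow S.conjContinuousAlgEquiv R n).symm
  simpa only [hpow, comp_apply, ContinuousLinearEquiv.coe_coe, adjoint_inner_right] using
    h (S.symm x) (adjoint (S : K →L[𝕜] H) y)

variable [CompleteSpace H]

theorem mul_eq (h : HasWeakPowerLimit T P) : T * P = P := by
  ext x
  refine ext_inner_right 𝕜 fun y =>
    tendsto_nhds_unique ?_ ((tendsto_add_atTop_iff_nat 1).2 (h x y))
  simpa only [pow_succ', mul_apply_eq_comp, adjoint_inner_right] using h x (adjoint T y)

theorem pow_mul_eq (h : HasWeakPowerLimit T P) (n : ℕ) : T ^ n * P = P := by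
  induction n with
  | zero => exact one_mul P
  | succ n ih => rw [pow_succ, mul_assoc, h.mul_eq, ih]

theorem isIdempotentElem (h : HasWeakPowerLimit T P) : IsIdempotentElem P := by
  ext x
  refine ext_inner_right 𝕜 fun y => tendsto_nhds_unique (h (P x) y) ?_
  exact tendsto_const_nhds.congr fun n =>
    congrArg (inner 𝕜 · y) (DFunLike.congr_fun (h.pow_mul_eq n) x).symm

end HasWeakPowerLimit

end

/-- The power sequence `{T^n}` converges weakly to `P` if and only if `T` is similar
(via a bounded bijection `S` with bounded inverse, from another Hilbert space `K`) to an
operator `R` whose power sequence converges weakly to an orthogonal projection `Q`;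
moreover, in that case `P = S Q S⁻¹`. -/
theorem stmt6 {H : Type u} [NormedAddCommGroup H] [InnerProductSpace ℂ H] [CompleteSpace H]
    (T P : H →L[ℂ] H) :
    (∀ x y : H,
      Tendsto (fun n : ℕ => (inner ℂ ((T ^ n) x) y : ℂ)) atTop (𝓝 (inner ℂ (P x) y)))
      ↔ ∃ (K : Type u) (_ : NormedAddCommGroup K) (_ : InnerProductSpace ℂ K)
          (_ : CompleteSpace K) (S : K ≃L[ℂ] H) (R Q : K →L[ℂ] K),
          T = (S : K →L[ℂ] H) ∘L R ∘L (S.symm : H →L[ℂ] K) ∧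
          Q ∘L Q = Q ∧ ContinuousLinearMap.adjoint Q = Q ∧
          (∀ x y : K,
            Tendsto (fun n : ℕ => (inner ℂ ((R ^ n) x) y : ℂ)) atTop (𝓝 (inner ℂ (Q x) y))) ∧
          P = (S : K →L[ℂ] H) ∘L Q ∘L (S.symm : H →L[ℂ] K) := by
  constructor
  · intro h
    obtain ⟨S, E, hE, rfl⟩ := HasWeakPowerLimit.isIdempotentElem h |>.exists_conj_isStarProjection
    refine ⟨H, inferInstance, inferInstance, inferInstance, S, S.symm ∘L T ∘L S, E, ?_,
      hE.isIdempotentElem, hE.isSelfAdjoint.adjoint_eq, ?_, rfl⟩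
    · ext x
      simp
    · have hE' : (S.symm : H →L[ℂ] H) ∘L ((S : H →L[ℂ] H) ∘L E ∘L (S.symm : H →L[ℂ] H)) ∘L
          (S.symm.symm : H →L[ℂ] H) = E := by
        ext x
        simp
      have hR := HasWeakPowerLimit.conj h S.symm
      rwa [hE', S.symm_symm] at hR
  · rintro ⟨K, _, _, _, S, R, Q, rfl, -, -, hRQ, rfl⟩
    exact HasWeakPowerLimit.conj hRQ S
end

section
/- Let H be a complex Hilbert space and suppose T, P ∈ B(H) are such that the power sequence {T^n} converges weakly to P. Then the following statements are equivalent: (i) P is an orthogonal projection (P² = P and P* = P); (ii) ker(I − T) = ker(I − T*); (iii) ker(I − T) reduces T. Moreover, if (i) holds, then P is the orthogonal projection of H onto ker(I − T). -/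
/-!
Passing to the weak limit in `T ^ (n + 1) = T * T ^ n` and in `T ^ n x = x` shows `T P = P` and
that `P` fixes every fixed vector of `T`; so `P` is an idempotent with range `ker (1 - T)`, and
likewise `P*`, the weak limit of `T* ^ n`, is an idempotent with range `ker (1 - T*)`. This gives
(i) ⇒ (ii) ⇒ (iii). Under (iii), `P*` inherits from `T*` the invariance of `ker (1 - T) = range P`,
i.e. `P P* P = P* P`, and in a C*-algebra this forces the idempotent `P` to be self-adjoint:
expanding with these relations gives `(P - P* P)* (P - P* P) = 0`.
-/

open Filter Topology

open scoped InnerProductSpace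

open ContinuousLinearMap (adjoint)

local postfix:max "⋆" => star

theorem IsIdempotentElem.isSelfAdjoint_of_mul_star_mul_eq {A : Type*} [NonUnitalNormedRing A]
    [StarRing A] [CStarRing A] {p : A} (hp : IsIdempotentElem p)
    (h : p * (p⋆ * p) = p⋆ * p) : IsSelfAdjoint p := by
  have h₁ : p⋆ * (p⋆ * p) = p⋆ * p := by rw [← mul_assoc, hp.star.eq]
  have h₂ : p⋆ * p * p = p⋆ * p := by rw [mul_assoc, hp.eq]
  have h₃ : p⋆ * p * (p⋆ * p) = p⋆ * p := by rw [mul_assoc, h, h₁]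
  have hzero : (p - p⋆ * p)⋆ * (p - p⋆ * p) = 0 := by
    rw [star_sub, star_mul, star_star, sub_mul, mul_sub, mul_sub, h₁, h₂, h₃]
    abel
  have hp' : p = p⋆ * p := sub_eq_zero.1 ((CStarRing.star_mul_self_eq_zero_iff _).1 hzero)
  rw [IsSelfAdjoint, hp', star_mul, star_star]

section WeakConvergence

variable {𝕜 E F ι : Type*} [RCLike 𝕜] [NormedAddCommGroup E] [InnerProductSpace 𝕜 E]
  [NormedAddCommGroup F] [InnerProductSpace 𝕜 F] {l : Filter ι}

variable (𝕜) in
def WeakTendsto (f : ι → E) (l : Filter ι) (v : E) : Prop :=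
  ∀ y, Tendsto (fun i => ⟪f i, y⟫_𝕜) l (𝓝 ⟪v, y⟫_𝕜)

theorem WeakTendsto.unique [l.NeBot] {f : ι → E} {v w : E} (hv : WeakTendsto 𝕜 f l v)
    (hw : WeakTendsto 𝕜 f l w) : v = w :=
  ext_inner_right 𝕜 fun y => tendsto_nhds_unique (hv y) (hw y)

theorem weakTendsto_const (v : E) : WeakTendsto 𝕜 (fun _ : ι => v) l v :=
  fun _ => tendsto_const_nhds

theorem WeakTendsto.comp {κ : Type*} {l' : Filter κ} {f : ι → E} {v : E}
    (hf : WeakTendsto 𝕜 f l v) {g : κ → ι} (hg : Tendsto g l' l) : WeakTendsto 𝕜 (f ∘ g) l' v :=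
  fun y => (hf y).comp hg

theorem WeakTendsto.congr {f g : ι → E} {v : E} (hf : WeakTendsto 𝕜 f l v)
    (hfg : ∀ i, f i = g i) : WeakTendsto 𝕜 g l v := by
  simpa only [WeakTendsto, hfg] using hf

theorem WeakTendsto.map [CompleteSpace E] [CompleteSpace F] (A : E →L[𝕜] F) {f : ι → E} {v : E}
    (hf : WeakTendsto 𝕜 f l v) : WeakTendsto 𝕜 (fun i => A (f i)) l (A v) := fun y => by
  simpa only [ContinuousLinearMap.adjoint_inner_right] using hf (adjoint A y)

end WeakConvergence

theorem mem_ker_one_sub_iff {R M : Type*} [Ring R] [AddCommGroup M] [Module R M]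
    [TopologicalSpace M] [IsTopologicalAddGroup M] {T : M →L[R] M} {x : M} :
    x ∈ LinearMap.ker ((1 - T : M →L[R] M) : M →ₗ[R] M) ↔ T x = x := by
  rw [LinearMap.mem_ker, ContinuousLinearMap.coe_coe, sub_apply, one_apply_eq_self, sub_eq_zero,
    eq_comm]

section PowerLimit

variable {𝕜 H : Type*} [RCLike 𝕜] [NormedAddCommGroup H] [InnerProductSpace 𝕜 H]
  {T P : H →L[𝕜] H} (hconv : ∀ x, WeakTendsto 𝕜 (fun n : ℕ => (T ^ n) x) atTop (P x))
include hconv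

theorem weakLimit_apply_of_isFixedPt {x : H} (hx : Function.IsFixedPt T x) : P x = x :=
  (hconv x).unique <| (weakTendsto_const x).congr fun n => by
    induction n with
    | zero => rfl
    | succ n ih => rw [pow_succ', mul_apply_eq_comp, ← ih, hx]

variable [CompleteSpace H]

theorem isFixedPt_weakLimit_apply (x : H) : Function.IsFixedPt T (P x) :=
  ((hconv x).map T).unique <| ((hconv x).comp (tendsto_add_atTop_nat 1)).congr fun n => by
    rw [Function.comp_apply, pow_succ', mul_apply_eq_comp]

theorem isIdempotentElem_weakLimit : IsIdempotentElem P :=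
  ContinuousLinearMap.ext fun x =>
    weakLimit_apply_of_isFixedPt hconv (isFixedPt_weakLimit_apply hconv x)

theorem range_weakLimit :
    LinearMap.range (P : H →ₗ[𝕜] H) = LinearMap.ker ((1 - T : H →L[𝕜] H) : H →ₗ[𝕜] H) := by
  ext x
  rw [LinearMap.mem_range, mem_ker_one_sub_iff]
  constructor
  · rintro ⟨y, rfl⟩
    exact isFixedPt_weakLimit_apply hconv y
  · exact fun hx => ⟨x, weakLimit_apply_of_isFixedPt hconv hx⟩

theorem weakTendsto_adjoint_pow (x : H) :
    WeakTendsto 𝕜 (fun n : ℕ => (adjoint T ^ n) x) atTop (adjoint P x) := fun y => by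
  have hpow (n : ℕ) : adjoint T ^ n = adjoint (T ^ n) := by
    simp only [← ContinuousLinearMap.star_eq_adjoint, star_pow]
  simpa only [hpow, ContinuousLinearMap.adjoint_inner_left, Function.comp_def, inner_conj_symm]
    using (RCLike.continuous_conj.tendsto _).comp (hconv y x)

theorem weakLimit_apply_mem_ker (A : H →L[𝕜] H)
    (hA : ∀ x, A x = 0 → A (T x) = 0) {x : H} (hx : A x = 0) : A (P x) = 0 := by
  have hpow : ∀ n : ℕ, A ((T ^ n) x) = 0 := by
    intro n
    induction n with
    | zero => exact hx
    | succ n ih => rw [pow_succ', mul_apply_eq_comp]; exact hA _ ih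
  exact ((hconv x).map A).unique ((weakTendsto_const 0).congr fun n => (hpow n).symm)

end PowerLimit

/-- Suppose `{T^n}` converges weakly to `P`. Then the following are equivalent:
(i) `P` is an orthogonal projection; (ii) `ker (I - T) = ker (I - T*)`;
(iii) `ker (I - T)` reduces `T`. Moreover, if (i) holds, then `P` is the orthogonal
projection of `H` onto `ker (I - T)`. -/
theorem stmt8 {H : Type*} [NormedAddCommGroup H] [InnerProductSpace ℂ H] [CompleteSpace H]
    (T P : H →L[ℂ] H)
    (hconv : ∀ x y : H,
      Tendsto (fun n : ℕ => (inner ℂ ((T ^ n) x) y : ℂ)) atTop (𝓝 (inner ℂ (P x) y))) :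
    List.TFAE
      [ P ∘L P = P ∧ ContinuousLinearMap.adjoint P = P,
        LinearMap.ker ((1 - T : H →L[ℂ] H) : H →ₗ[ℂ] H) = LinearMap.ker ((1 - ContinuousLinearMap.adjoint T : H →L[ℂ] H) : H →ₗ[ℂ] H),
        (∀ x ∈ LinearMap.ker ((1 - T : H →L[ℂ] H) : H →ₗ[ℂ] H), T x ∈ LinearMap.ker ((1 - T : H →L[ℂ] H) : H →ₗ[ℂ] H)) ∧
          (∀ x ∈ LinearMap.ker ((1 - T : H →L[ℂ] H) : H →ₗ[ℂ] H),
            ContinuousLinearMap.adjoint T x ∈ LinearMap.ker ((1 - T : H →L[ℂ] H) : H →ₗ[ℂ] H)) ] ∧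
    ((P ∘L P = P ∧ ContinuousLinearMap.adjoint P = P) →
      LinearMap.range (P : H →ₗ[ℂ] H) = LinearMap.ker ((1 - T : H →L[ℂ] H) : H →ₗ[ℂ] H)) := by
  have hconv' := weakTendsto_adjoint_pow hconv
  have hrange := range_weakLimit hconv
  refine ⟨?_, fun _ => hrange⟩
  tfae_have 1 → 2 := fun ⟨_, hP⟩ => by
    rw [← hrange, ← range_weakLimit hconv', hP]
  tfae_have 2 → 3 := fun hker => by
    refine ⟨fun x hx => ?_, fun x hx => ?_⟩
    · exact mem_ker_one_sub_iff.2 (congrArg T (mem_ker_one_sub_iff.1 hx))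
    · rwa [mem_ker_one_sub_iff.1 (hker ▸ hx)]
  tfae_have 3 → 1 := fun ⟨_, hinv⟩ => by
    have hidem := isIdempotentElem_weakLimit hconv
    have hPinv x (hx : x ∈ LinearMap.ker ((1 - T : H →L[ℂ] H) : H →ₗ[ℂ] H)) :
        T (adjoint P x) = adjoint P x :=
      mem_ker_one_sub_iff.1 (weakLimit_apply_mem_ker hconv' (1 - T) hinv hx)
    have hsa : IsSelfAdjoint P := hidem.isSelfAdjoint_of_mul_star_mul_eq <|
      ContinuousLinearMap.ext fun x =>
        weakLimit_apply_of_isFixedPt hconv (hPinv _ (hrange ▸ ⟨x, rfl⟩))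
    exact ⟨hidem, hsa.adjoint_eq⟩
  tfae_finish
end

section
/- For every real number θ ∈ (1, ∞) there exists a bounded linear operator T on the complex Hilbert space ℓ²(ℕ) such that liminf_{n→∞} ‖T^n‖ = 1, limsup_{n→∞} ‖T^n‖ = θ, and T is weakly stable, i.e., ⟨T^n x, y⟩ → 0 as n → ∞ for all x, y ∈ ℓ²(ℕ). In particular, T is weakly stable but neither a contraction nor uniformly stable. -/
/-!
Let `B` be the backward shift on `ℓ²(ℕ)` and `D` the diagonal operator with weights
`θ, θ⁻¹, θ, θ⁻¹, …`. Consecutive weights multiply to `1`, so `D B D = B`; hence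
`(D B)^(2m) = B^(2m)` and `(D B)^(2m+1) = D B^(2m+1)`, and `‖(D B)^n‖` alternates between `1`
and `θ`, while `(D B)^n y → 0` for every `y` because `B^n y` is the tail of `y`.
The adjoint `T = (D B)†` has the same power norms and `⟪T^n x, y⟫ = ⟪x, (D B)^n y⟫ → 0`.
-/

open Filter Topology
open scoped ENNReal

section
variable {M : Type*} [Monoid M] {b d : M}

theorem mul_pow_two_mul_of_mul_mul_eq (h : d * b * d = b) (m : ℕ) :
    (d * b) ^ (2 * m) = b ^ (2 * m) := by
  have hsq : (d * b) ^ 2 = b ^ 2 := by rw [sq, sq, ← mul_assoc, h]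
  rw [pow_mul, pow_mul, hsq]

theorem mul_pow_two_mul_add_one_of_mul_mul_eq (h : d * b * d = b) (m : ℕ) :
    (d * b) ^ (2 * m + 1) = d * b ^ (2 * m + 1) := by
  rw [pow_succ', mul_pow_two_mul_of_mul_mul_eq h, mul_assoc, ← pow_succ']

end

section
variable {α : Type*} [ConditionallyCompleteLinearOrder α] {a b : α}

theorem liminf_ite_even (hab : a ≤ b) :
    liminf (fun n : ℕ => if Even n then a else b) atTop = a := by
  have hge : ∀ n : ℕ, a ≤ if Even n then a else b := fun n => by split_ifs <;> simp [hab]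
  have hle : ∀ n : ℕ, (if Even n then a else b) ≤ b := fun n => by split_ifs <;> simp [hab]
  refine le_antisymm (liminf_le_of_frequently_le ?_ (isBoundedUnder_of ⟨a, hge⟩))
    (le_liminf_of_le (isBoundedUnder_of ⟨b, hle⟩).isCoboundedUnder_ge (.of_forall hge))
  exact frequently_atTop.2 fun N => ⟨2 * N, by omega, by simp⟩

theorem limsup_ite_even (hab : a ≤ b) :
    limsup (fun n : ℕ => if Even n then a else b) atTop = b := by
  have hge : ∀ n : ℕ, a ≤ if Even n then a else b := fun n => by split_ifs <;> simp [hab]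
  have hle : ∀ n : ℕ, (if Even n then a else b) ≤ b := fun n => by split_ifs <;> simp [hab]
  refine le_antisymm
    (limsup_le_of_le (isBoundedUnder_of ⟨a, hge⟩).isCoboundedUnder_le (.of_forall hle))
    (le_limsup_of_frequently_le ?_ (isBoundedUnder_of ⟨b, hle⟩))
  exact frequently_atTop.2 fun N => ⟨2 * N + 1, by omega, by simp⟩

end

theorem Memℓp.comp_injective {α ι E : Type*} [NormedAddCommGroup E] {p : ℝ≥0∞}
    {f : α → E} (hf : Memℓp f p) {g : ι → α} (hg : g.Injective) : Memℓp (f ∘ g) p := by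
  obtain rfl | rfl | hp := p.trichotomy
  · exact memℓp_zero <| hf.finite_dsupport.preimage hg.injOn
  · exact memℓp_infty <| hf.bddAbove.mono <| Set.range_comp_subset_range g fun a => ‖f a‖
  · exact memℓp_gen <| (hf.summable hp).comp_injective hg

namespace lp

theorem norm_le_of_apply_eq_comp_injective {α ι E : Type*} [NormedAddCommGroup E]
    {p : ℝ≥0∞} [Fact (1 ≤ p)] {x : lp (fun _ : α => E) p} {y : lp (fun _ : ι => E) p}
    {g : ι → α} (hg : g.Injective) (hy : ∀ i, y i = x (g i)) : ‖y‖ ≤ ‖x‖ := by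
  have hp : p ≠ 0 := (zero_lt_one.trans_le Fact.out).ne'
  obtain rfl | hp' := eq_or_ne p ∞
  · exact norm_le_of_forall_le (norm_nonneg _) fun i => hy i ▸ norm_apply_le_norm hp x (g i)
  · have hr : 0 < p.toReal := ENNReal.toReal_pos hp hp'
    refine norm_le_of_tsum_le hr (norm_nonneg _) ?_
    simp_rw [norm_rpow_eq_tsum hr, hy]
    exact tsum_comp_le_tsum_of_inj ((lp.memℓp x).summable hr) (fun _ => by positivity) hg

variable {𝕜 E : Type*} [NontriviallyNormedField 𝕜] [NormedAddCommGroup E] [NormedSpace 𝕜 E]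
  {p : ℝ≥0∞} [Fact (1 ≤ p)]

variable (𝕜 E p) in
noncomputable def backwardShift : lp (fun _ : ℕ => E) p →L[𝕜] lp (fun _ : ℕ => E) p :=
  LinearMap.mkContinuous
    { toFun x := ⟨fun k => x (k + 1), (lp.memℓp x).comp_injective (add_left_injective 1)⟩
      map_add' := fun _ _ => rfl
      map_smul' := fun _ _ => rfl }
    1 fun _ => by
      rw [one_mul]
      exact norm_le_of_apply_eq_comp_injective (add_left_injective 1) fun _ => rfl

@[simp]
theorem backwardShift_apply (x : lp (fun _ : ℕ => E) p) (k : ℕ) :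
    backwardShift 𝕜 E p x k = x (k + 1) := rfl

theorem backwardShift_pow_apply (n : ℕ) (x : lp (fun _ : ℕ => E) p) (k : ℕ) :
    (backwardShift 𝕜 E p ^ n) x k = x (k + n) := by
  induction n generalizing x k with
  | zero => rfl
  | succ n ih =>
    rw [pow_succ, mul_apply_eq_comp, ih, backwardShift_apply, add_assoc]

theorem norm_backwardShift_pow_le (n : ℕ) : ‖backwardShift 𝕜 E p ^ n‖ ≤ 1 :=
  ContinuousLinearMap.opNorm_le_bound _ zero_le_one fun x => by
    rw [one_mul]
    exact norm_le_of_apply_eq_comp_injective (add_left_injective n) (backwardShift_pow_apply n x)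

theorem norm_backwardShift_pow [Nontrivial E] (n : ℕ) : ‖backwardShift 𝕜 E p ^ n‖ = 1 := by
  refine le_antisymm (norm_backwardShift_pow_le n) ?_
  obtain ⟨a, ha⟩ := exists_ne (0 : E)
  have hp : 0 < p := zero_lt_one.trans_le Fact.out
  have : ‖a‖ ≤ ‖backwardShift 𝕜 E p ^ n‖ * ‖a‖ :=
    calc ‖a‖ = ‖(backwardShift 𝕜 E p ^ n) (lp.single p n a) 0‖ := by
            rw [backwardShift_pow_apply, zero_add, lp.single_apply_self]
      _ ≤ ‖(backwardShift 𝕜 E p ^ n) (lp.single p n a)‖ := norm_apply_le_norm hp.ne' _ 0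
      _ ≤ ‖backwardShift 𝕜 E p ^ n‖ * ‖a‖ := by
            simpa [lp.norm_single hp] using (backwardShift 𝕜 E p ^ n).le_opNorm (lp.single p n a)
  exact le_of_mul_le_mul_right (by simpa using this) (norm_pos_iff.2 ha)

theorem tendsto_backwardShift_pow_apply (hp : p ≠ ∞) (x : lp (fun _ : ℕ => E) p) :
    Tendsto (fun n => (backwardShift 𝕜 E p ^ n) x) atTop (𝓝 0) := by
  have hr : 0 < p.toReal := ENNReal.toReal_pos (zero_lt_one.trans_le Fact.out).ne' hp
  have htail :
      Tendsto (fun n => ‖(backwardShift 𝕜 E p ^ n) x‖ ^ p.toReal) atTop (𝓝 0) := by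
    simp_rw [norm_rpow_eq_tsum hr, backwardShift_pow_apply]
    exact tendsto_sum_nat_add fun k => ‖x k‖ ^ p.toReal
  rw [tendsto_zero_iff_norm_tendsto_zero]
  convert htail.rpow_const (p := p.toReal⁻¹) (.inr (by positivity)) using 1
  · ext n; rw [Real.rpow_rpow_inv (norm_nonneg _) hr.ne']
  · rw [Real.zero_rpow (inv_ne_zero hr.ne')]

end lp

noncomputable section

local notation "ℓ²" => lp (fun _ : ℕ => ℂ) 2

def alternatingWeight (θ : ℝ) (k : ℕ) : ℂ := ((if Even k then θ else θ⁻¹ : ℝ) : ℂ)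

theorem alternatingWeight_mul_succ {θ : ℝ} (hθ : θ ≠ 0) (k : ℕ) :
    alternatingWeight θ k * alternatingWeight θ (k + 1) = 1 := by
  rcases Nat.even_or_odd k with hk | hk
  · simp [alternatingWeight, hk, Nat.even_add_one, hθ]
  · simp [alternatingWeight, Nat.not_even_iff_odd.2 hk, Nat.even_add_one, hθ]

theorem norm_alternatingWeight_le (θ : ℝ) (k : ℕ) :
    ‖alternatingWeight θ k‖ ≤ max |θ| |θ⁻¹| := by
  unfold alternatingWeight
  split_ifs <;> simp

def alternatingDiag (θ : ℝ) : ℓ² →L[ℂ] ℓ² :=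
  lp.mapCLM 2 (fun k => alternatingWeight θ k • ContinuousLinearMap.id ℂ ℂ)
    (le_max_of_le_left (abs_nonneg θ)) fun k => by
      rw [norm_smul, ContinuousLinearMap.norm_id, mul_one]
      exact norm_alternatingWeight_le θ k

theorem alternatingDiag_apply (θ : ℝ) (x : ℓ²) (k : ℕ) :
    alternatingDiag θ x k = alternatingWeight θ k * x k := rfl

theorem norm_alternatingDiag_le {θ : ℝ} (hθ : 1 ≤ θ) : ‖alternatingDiag θ‖ ≤ θ := by
  refine (lp.norm_mapCLM_le _ _ _ _).trans_eq ?_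
  rw [abs_of_pos (by positivity : 0 < θ), abs_of_pos (by positivity : 0 < θ⁻¹),
    max_eq_left ((inv_le_one_of_one_le₀ hθ).trans hθ)]

local notation "B" => lp.backwardShift ℂ ℂ 2

theorem alternatingDiag_mul_backwardShift_mul_alternatingDiag {θ : ℝ} (hθ : θ ≠ 0) :
    alternatingDiag θ * B * alternatingDiag θ = B := by
  ext x k
  simp only [mul_apply_eq_comp, alternatingDiag_apply, lp.backwardShift_apply, ← mul_assoc,
    alternatingWeight_mul_succ hθ, one_mul]

theorem norm_alternatingDiag_mul_backwardShift_pow {θ : ℝ} (hθ : 1 ≤ θ) (n : ℕ) :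
    ‖alternatingDiag θ * B ^ n‖ = θ := by
  refine le_antisymm ((norm_mul_le _ _).trans ?_) ?_
  · simpa [lp.norm_backwardShift_pow] using norm_alternatingDiag_le hθ
  · calc θ = ‖(alternatingDiag θ * B ^ n) (lp.single 2 n 1) 0‖ := by
          rw [mul_apply_eq_comp, alternatingDiag_apply, lp.backwardShift_pow_apply, zero_add,
            lp.single_apply_self]
          simp [alternatingWeight, abs_of_pos (by positivity : 0 < θ)]
      _ ≤ ‖(alternatingDiag θ * B ^ n) (lp.single 2 n 1)‖ :=
          lp.norm_apply_le_norm two_ne_zero _ 0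
      _ ≤ ‖alternatingDiag θ * B ^ n‖ := by
          simpa [lp.norm_single] using (alternatingDiag θ * B ^ n).le_opNorm (lp.single 2 n 1)

def alternatingShift (θ : ℝ) : ℓ² →L[ℂ] ℓ² := alternatingDiag θ * B

theorem norm_alternatingShift_pow {θ : ℝ} (hθ : 1 ≤ θ) (n : ℕ) :
    ‖alternatingShift θ ^ n‖ = if Even n then 1 else θ := by
  have h := alternatingDiag_mul_backwardShift_mul_alternatingDiag (by positivity : θ ≠ 0)
  obtain ⟨m, rfl | rfl⟩ := Nat.even_or_odd' n
  · simp [alternatingShift, mul_pow_two_mul_of_mul_mul_eq h, lp.norm_backwardShift_pow]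
  · simp [alternatingShift, mul_pow_two_mul_add_one_of_mul_mul_eq h,
      norm_alternatingDiag_mul_backwardShift_pow hθ]

theorem tendsto_alternatingShift_pow_apply {θ : ℝ} (hθ : 1 ≤ θ) (x : ℓ²) :
    Tendsto (fun n => (alternatingShift θ ^ n) x) atTop (𝓝 0) := by
  have h := alternatingDiag_mul_backwardShift_mul_alternatingDiag (by positivity : θ ≠ 0)
  have hle : ∀ n, ‖(alternatingShift θ ^ n) x‖ ≤ θ * ‖(B ^ n) x‖ := fun n => by
    obtain ⟨m, rfl | rfl⟩ := Nat.even_or_odd' n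
    · rw [alternatingShift, mul_pow_two_mul_of_mul_mul_eq h]
      exact le_mul_of_one_le_left (norm_nonneg _) hθ
    · rw [alternatingShift, mul_pow_two_mul_add_one_of_mul_mul_eq h, mul_apply_eq_comp]
      exact (alternatingDiag θ).le_of_opNorm_le (norm_alternatingDiag_le hθ) _
  refine squeeze_zero_norm hle ?_
  simpa using ((lp.tendsto_backwardShift_pow_apply ENNReal.ofNat_ne_top x).norm).const_mul θ

end

/-- For every `θ ∈ (1, ∞)` there is a bounded operator `T` on `ℓ²(ℕ)` with
`liminf ‖T^n‖ = 1`, `limsup ‖T^n‖ = θ`, and `T` weakly stable; in particular `T` is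
weakly stable but neither a contraction nor uniformly stable. -/
theorem stmt18 (θ : ℝ) (hθ : 1 < θ) :
    ∃ T : (lp (fun _ : ℕ => ℂ) 2) →L[ℂ] (lp (fun _ : ℕ => ℂ) 2),
      Filter.liminf (fun n : ℕ => ‖T ^ n‖) atTop = 1 ∧
      Filter.limsup (fun n : ℕ => ‖T ^ n‖) atTop = θ ∧
      (∀ x y : lp (fun _ : ℕ => ℂ) 2,
        Tendsto (fun n : ℕ => (inner ℂ ((T ^ n) x) y : ℂ)) atTop (𝓝 (0 : ℂ))) ∧
      ¬ ‖T‖ ≤ 1 ∧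
      ¬ Tendsto (fun n : ℕ => ‖T ^ n‖) atTop (𝓝 (0 : ℝ)) := by
  have hnorm (n : ℕ) : ‖star (alternatingShift θ) ^ n‖ = if Even n then 1 else θ := by
    rw [← star_pow, ContinuousLinearMap.star_eq_adjoint, LinearIsometryEquiv.norm_map,
      norm_alternatingShift_pow hθ.le]
  refine ⟨star (alternatingShift θ), ?_, ?_, fun x y => ?_, ?_, fun h => ?_⟩
  · simpa only [hnorm] using liminf_ite_even hθ.le
  · simpa only [hnorm] using limsup_ite_even hθ.le
  · simp_rw [← star_pow, ContinuousLinearMap.star_eq_adjoint,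
      ContinuousLinearMap.adjoint_inner_left]
    simpa using tendsto_const_nhds.inner (tendsto_alternatingShift_pow_apply hθ.le y)
  · rw [← pow_one (star (alternatingShift θ)), hnorm, if_neg Nat.not_even_one]
    exact hθ.not_ge
  · obtain ⟨n, hn⟩ := (h.eventually (gt_mem_nhds zero_lt_one)).exists
    rw [hnorm] at hn
    split_ifs at hn <;> linarith
end

section
/- Let H be a complex Hilbert space and let U ∈ B(H) be a unitary operator. Then ker(I − U) reduces U, and the power sequence {U^n} is weakly convergent if and only if ⟨U^n x, y⟩ → 0 as n → ∞ for every x in the orthogonal complement ker(I − U)^⊥ and every y ∈ H; if this is the case, then the weak limit of {U^n} is the orthogonal projection of H onto ker(I − U). -/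
open Filter Topology

/-!
If `U†U = 1` and `U x = x` then `U† x = U†U x = x`, so `K = ker (I - U)` reduces `U`, and
`⟪Uⁿ x, y⟫ = ⟪x, U†ⁿ y⟫ = 0` for `x ∈ Kᗮ`, `y ∈ K`. A weak limit `A` of `Uⁿ` satisfies `U A = A`,
hence maps into `K`, and by the previous remark kills `Kᗮ`; so `⟪Uⁿ x, y⟫ → 0` on `Kᗮ`.
Conversely, if this holds, splitting `x = P x + (x - P x)` with `P` the orthogonal projection onto
`K` shows that `Uⁿ → P` weakly, and weak limits are unique.
-/

section

open ContinuousLinearMap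

variable {𝕜 E : Type*} [RCLike 𝕜] [NormedAddCommGroup E] [InnerProductSpace 𝕜 E]

/-- `T n → A` in the weak operator topology. -/
def TendstoWeakly (T : ℕ → E →L[𝕜] E) (A : E →L[𝕜] E) : Prop :=
  ∀ x y : E, Tendsto (fun n => inner 𝕜 (T n x) y) atTop (𝓝 (inner 𝕜 (A x) y))

theorem TendstoWeakly.unique {T : ℕ → E →L[𝕜] E} {A B : E →L[𝕜] E}
    (hA : TendstoWeakly T A) (hB : TendstoWeakly T B) : A = B :=
  ext fun x => ext_inner_right 𝕜 fun y => tendsto_nhds_unique (hA x y) (hB x y)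

def fixedSubspace (U : E →L[𝕜] E) : Submodule 𝕜 E :=
  LinearMap.ker ((1 - U : E →L[𝕜] E) : E →ₗ[𝕜] E)

theorem mem_fixedSubspace_iff {U : E →L[𝕜] E} {x : E} : x ∈ fixedSubspace U ↔ U x = x := by
  rw [fixedSubspace, LinearMap.mem_ker, coe_coe, sub_apply, one_apply_eq_self,
    sub_eq_zero, eq_comm]

variable [CompleteSpace E] {U : E →L[𝕜] E}

instance : (fixedSubspace U).HasOrthogonalProjection :=
  have : CompleteSpace (fixedSubspace U) := (isClosed_ker (1 - U)).completeSpace_coe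
  inferInstance

theorem adjoint_apply_eq_self (hU : adjoint U ∘L U = 1) {x : E} (hx : U x = x) :
    adjoint U x = x := by
  conv_lhs => rw [← hx, ← ContinuousLinearMap.comp_apply, hU, one_apply_eq_self]

theorem inner_pow_apply_eq_zero (hU : adjoint U ∘L U = 1) {x y : E}
    (hx : x ∈ (fixedSubspace U)ᗮ) (hy : y ∈ fixedSubspace U) (n : ℕ) :
    inner 𝕜 ((U ^ n) x) y = 0 := by
  have hUy : (adjoint U ^ n) y = y := by
    rw [pow_apply_eq_iterate]
    exact Function.IsFixedPt.iterate (adjoint_apply_eq_self hU (mem_fixedSubspace_iff.mp hy)) n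
  rw [← adjoint_inner_right, ← star_eq_adjoint, star_pow, star_eq_adjoint, hUy]
  exact Submodule.inner_left_of_mem_orthogonal hy hx

theorem TendstoWeakly.apply_mem_fixedSubspace {A : E →L[𝕜] E}
    (hA : TendstoWeakly (fun n => U ^ n) A) (x : E) : A x ∈ fixedSubspace U := by
  refine mem_fixedSubspace_iff.mpr (ext_inner_right 𝕜 fun y => ?_)
  have hshift : Tendsto (fun n => inner 𝕜 ((U ^ (n + 1)) x) y) atTop (𝓝 (inner 𝕜 (A x) y)) :=
    (hA x y).comp (tendsto_add_atTop_nat 1)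
  have hadj : Tendsto (fun n => inner 𝕜 ((U ^ (n + 1)) x) y) atTop
      (𝓝 (inner 𝕜 (A x) (adjoint U y))) := by
    simpa only [pow_succ', mul_apply_eq_comp, adjoint_inner_right] using
      hA x (adjoint U y)
  rw [← adjoint_inner_right]
  exact tendsto_nhds_unique hadj hshift

theorem TendstoWeakly.apply_eq_zero_of_mem_orthogonal (hU : adjoint U ∘L U = 1) {A : E →L[𝕜] E}
    (hA : TendstoWeakly (fun n => U ^ n) A) {x : E} (hx : x ∈ (fixedSubspace U)ᗮ) : A x = 0 := by
  have hAx : A x ∈ (fixedSubspace U)ᗮ := fun y hy => by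
    rw [inner_eq_zero_symm]
    refine tendsto_nhds_unique (hA x y) ?_
    simpa only [inner_pow_apply_eq_zero hU hx hy] using tendsto_const_nhds
  exact (Submodule.mem_orthogonal' _ _).mp hAx _ (hA.apply_mem_fixedSubspace x) |>
    inner_self_eq_zero.mp

theorem tendstoWeakly_pow_starProjection
    (h : ∀ x ∈ (fixedSubspace U)ᗮ, ∀ y : E,
      Tendsto (fun n => inner 𝕜 ((U ^ n) x) y) atTop (𝓝 0)) :
    TendstoWeakly (fun n => U ^ n) (fixedSubspace U).starProjection := by
  intro x y
  set p := (fixedSubspace U).starProjection x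
  have hp : Function.IsFixedPt U p :=
    mem_fixedSubspace_iff.mp (Submodule.starProjection_apply_mem _ x)
  have hsplit : ∀ n, inner 𝕜 ((U ^ n) x) y = inner 𝕜 p y + inner 𝕜 ((U ^ n) (x - p)) y := by
    intro n
    rw [← inner_add_left, map_sub, pow_apply_eq_iterate U n p, hp.iterate n, add_sub_cancel]
  simpa only [hsplit, add_zero] using
    tendsto_const_nhds.add (h _ (Submodule.sub_starProjection_mem_orthogonal x) y)

theorem TendstoWeakly.eq_starProjection (hU : adjoint U ∘L U = 1) {A : E →L[𝕜] E}
    (hA : TendstoWeakly (fun n => U ^ n) A) : A = (fixedSubspace U).starProjection :=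
  hA.unique <| tendstoWeakly_pow_starProjection fun x hx y => by
    simpa only [hA.apply_eq_zero_of_mem_orthogonal hU hx, inner_zero_left] using hA x y

end

theorem stmt19_general {H : Type*} [NormedAddCommGroup H] [InnerProductSpace ℂ H] [CompleteSpace H]
    (U : H →L[ℂ] H)
    (hU₂ : ContinuousLinearMap.adjoint U ∘L U = 1) :
    ((∀ x ∈ LinearMap.ker ((1 - U : H →L[ℂ] H) : H →ₗ[ℂ] H), U x ∈ LinearMap.ker ((1 - U : H →L[ℂ] H) : H →ₗ[ℂ] H)) ∧
      (∀ x ∈ LinearMap.ker ((1 - U : H →L[ℂ] H) : H →ₗ[ℂ] H),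
        ContinuousLinearMap.adjoint U x ∈ LinearMap.ker ((1 - U : H →L[ℂ] H) : H →ₗ[ℂ] H))) ∧
    ((∃ A : H →L[ℂ] H, ∀ x y : H,
        Tendsto (fun n : ℕ => (inner ℂ ((U ^ n) x) y : ℂ)) atTop (𝓝 (inner ℂ (A x) y)))
      ↔ (∀ x ∈ (LinearMap.ker ((1 - U : H →L[ℂ] H) : H →ₗ[ℂ] H))ᗮ, ∀ y : H,
          Tendsto (fun n : ℕ => (inner ℂ ((U ^ n) x) y : ℂ)) atTop (𝓝 (0 : ℂ)))) ∧
    (∀ P : H →L[ℂ] H,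
      (∀ x y : H,
        Tendsto (fun n : ℕ => (inner ℂ ((U ^ n) x) y : ℂ)) atTop (𝓝 (inner ℂ (P x) y))) →
      (P ∘L P = P ∧ ContinuousLinearMap.adjoint P = P ∧
        LinearMap.range (P : H →ₗ[ℂ] H) = LinearMap.ker ((1 - U : H →L[ℂ] H) : H →ₗ[ℂ] H))) := by
  refine ⟨⟨fun x hx => ?_, fun x hx => ?_⟩, ⟨fun ⟨A, hA⟩ x hx y => ?_, fun h => ?_⟩, fun P hP => ?_⟩
  · have hx : U x = x := mem_fixedSubspace_iff.mp hx
    exact mem_fixedSubspace_iff.mpr (by rw [hx, hx])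
  · rwa [adjoint_apply_eq_self hU₂ (mem_fixedSubspace_iff.mp hx)]
  · simpa only [TendstoWeakly.apply_eq_zero_of_mem_orthogonal hU₂ hA hx, inner_zero_left]
      using hA x y
  · exact ⟨_, tendstoWeakly_pow_starProjection h⟩
  · obtain rfl : P = (fixedSubspace U).starProjection := TendstoWeakly.eq_starProjection hU₂ hP
    exact ⟨(fixedSubspace U).isIdempotentElem_starProjection, isSelfAdjoint_starProjection _,
      Submodule.range_starProjection _⟩

/-- Let `U` be unitary. Then `ker (I - U)` reduces `U`, and `{U^n}` is weakly
convergent iff `⟨U^n x, y⟩ → 0` for all `x ∈ ker (I - U)ᗮ` and `y ∈ H`; in that case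
the weak limit is the orthogonal projection of `H` onto `ker (I - U)`. -/
theorem stmt19 {H : Type*} [NormedAddCommGroup H] [InnerProductSpace ℂ H] [CompleteSpace H]
    (U : H →L[ℂ] H)
    (hU₁ : U ∘L ContinuousLinearMap.adjoint U = 1)
    (hU₂ : ContinuousLinearMap.adjoint U ∘L U = 1) :
    ((∀ x ∈ LinearMap.ker ((1 - U : H →L[ℂ] H) : H →ₗ[ℂ] H), U x ∈ LinearMap.ker ((1 - U : H →L[ℂ] H) : H →ₗ[ℂ] H)) ∧
      (∀ x ∈ LinearMap.ker ((1 - U : H →L[ℂ] H) : H →ₗ[ℂ] H),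
        ContinuousLinearMap.adjoint U x ∈ LinearMap.ker ((1 - U : H →L[ℂ] H) : H →ₗ[ℂ] H))) ∧
    ((∃ A : H →L[ℂ] H, ∀ x y : H,
        Tendsto (fun n : ℕ => (inner ℂ ((U ^ n) x) y : ℂ)) atTop (𝓝 (inner ℂ (A x) y)))
      ↔ (∀ x ∈ (LinearMap.ker ((1 - U : H →L[ℂ] H) : H →ₗ[ℂ] H))ᗮ, ∀ y : H,
          Tendsto (fun n : ℕ => (inner ℂ ((U ^ n) x) y : ℂ)) atTop (𝓝 (0 : ℂ)))) ∧
    (∀ P : H →L[ℂ] H,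
      (∀ x y : H,
        Tendsto (fun n : ℕ => (inner ℂ ((U ^ n) x) y : ℂ)) atTop (𝓝 (inner ℂ (P x) y))) →
      (P ∘L P = P ∧ ContinuousLinearMap.adjoint P = P ∧
        LinearMap.range (P : H →ₗ[ℂ] H) = LinearMap.ker ((1 - U : H →L[ℂ] H) : H →ₗ[ℂ] H))) :=
  stmt19_general U hU₂
end
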